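/- arXiv:1904.06806 — 4 statements merged into one kernel-verified Lean document; each statement's English description precedes it below -/
import Mathlib

section
/- Let H⁺ and H⁰ be complex Hilbert spaces and ι : H⁺ → H⁰ a compact injective continuous linear map. Suppose K : H⁺ → H⁺ is a continuous linear map satisfying ⟨K u, v⟩₊ = ⟨ι u, ι v⟩₀ for all u, v ∈ H⁺. Then there exists a Hilbert (orthonormal) basis of H⁺ consisting of eigenvectors of K, and all the corresponding eigenvalues are positive real numbers. -/
/-!
Writing `K = ι† ∘ ι` shows that `K` is a compact self-adjoint operator. By the spectral theorem
for such operators the eigenspaces of `K` are mutually orthogonal with trivial joint orthogonal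
complement, so Hilbert bases of the eigenspaces glue to a Hilbert basis of eigenvectors. For a
unit eigenvector `x` with eigenvalue `μ`, `conj μ = ⟪K x, x⟫ = ‖ι x‖ ^ 2 > 0`. The basis is
countable, hence can be indexed by a type in `Type`: its vectors lie in the range of `K`, which is
separable since `K` is compact, and distinct orthonormal vectors are at distance `√2`.
-/

open scoped ComplexInnerProductSpace

universe u v w

open Submodule Set Module.End
open scoped InnerProductSpace InnerProduct

theorem IsCompactOperator.isSeparable_range {𝕜 M N : Type*} [NontriviallyNormedField 𝕜]
    [NormedAddCommGroup M] [NormedSpace 𝕜 M] [NormedAddCommGroup N] [NormedSpace 𝕜 N]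
    {T : M →L[𝕜] N} (hT : IsCompactOperator T) : TopologicalSpace.IsSeparable (range T) := by
  choose C hC hTC using fun n : ℕ => hT.image_closedBall_subset_compact n
  refine (TopologicalSpace.IsSeparable.iUnion fun n => (hC n).isSeparable).mono ?_
  rintro _ ⟨x, rfl⟩
  obtain ⟨n, hn⟩ := exists_nat_ge ‖x‖
  exact mem_iUnion.mpr ⟨n, hTC n ⟨x, by simpa using hn, rfl⟩⟩

variable {𝕜 : Type w} [RCLike 𝕜] {E : Type u} [NormedAddCommGroup E] [InnerProductSpace 𝕜 E]

namespace HilbertBasis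

noncomputable def reindex [CompleteSpace E] {ι ι' : Type*} (b : HilbertBasis ι 𝕜 E) (e : ι ≃ ι') :
    HilbertBasis ι' 𝕜 E :=
  HilbertBasis.mk (b.orthonormal.comp e.symm e.symm.injective)
    (by rw [e.symm.surjective.range_comp, b.dense_span])

theorem reindex_apply [CompleteSpace E] {ι ι' : Type*} (b : HilbertBasis ι 𝕜 E) (e : ι ≃ ι')
    (i : ι') : b.reindex e i = b (e.symm i) := by
  simp [reindex, HilbertBasis.coe_mk]

theorem le_topologicalClosure_span_coe {ι : Type*} {V : Submodule 𝕜 E} (b : HilbertBasis ι 𝕜 V) :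
    V ≤ (span 𝕜 (range fun i => (b i : E))).topologicalClosure := by
  intro x hx
  have hmem : (⟨x, hx⟩ : V) ∈ closure (span 𝕜 (range b) : Set V) := by
    rw [← topologicalClosure_coe, b.dense_span]
    trivial
  rw [← SetLike.mem_coe, topologicalClosure_coe]
  refine map_mem_closure continuous_subtype_val hmem fun y hy => ?_
  have := apply_mem_span_image_of_mem_span V.subtype hy
  rwa [← range_comp] at this

end HilbertBasis

theorem Orthonormal.one_le_dist {ι : Type*} {w : ι → E} (hw : Orthonormal 𝕜 w) {i j : ι}
    (hij : i ≠ j) : 1 ≤ dist (w i) (w j) := by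
  have hinner : ⟪w i, w i - w j⟫_𝕜 = 1 := by
    rw [inner_sub_right, hw.inner_eq_zero hij, inner_self_eq_norm_sq_to_K, hw.1 i]
    simp
  calc (1 : ℝ) = ‖⟪w i, w i - w j⟫_𝕜‖ := by simp [hinner]
    _ ≤ ‖w i‖ * ‖w i - w j‖ := norm_inner_le_norm _ _
    _ = dist (w i) (w j) := by rw [hw.1 i, one_mul, dist_eq_norm]

theorem Orthonormal.countable_of_isSeparable {ι : Type*} {w : ι → E} (hw : Orthonormal 𝕜 w)
    (hsep : TopologicalSpace.IsSeparable (range w)) : Countable ι := by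
  obtain ⟨C, hC, hwC⟩ := hsep
  have hnear : ∀ i, ∃ c ∈ C, dist (w i) c < 1 / 2 := fun i =>
    Metric.mem_closure_iff.mp (hwC ⟨i, rfl⟩) _ (by norm_num)
  choose c hcC hc using hnear
  have : Countable C := hC.to_subtype
  refine Function.Injective.countable (f := fun i => (⟨c i, hcC i⟩ : C)) fun i j hij => ?_
  by_contra hne
  have hcij : c i = c j := congrArg Subtype.val hij
  have := dist_triangle_right (w i) (w j) (c i)
  linarith [hw.one_le_dist hne, hc i, hcij ▸ hc j]

theorem OrthogonalFamily.exists_hilbertBasis_subordinate [CompleteSpace E] {ι : Type v}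
    {V : ι → Submodule 𝕜 E} [∀ i, CompleteSpace (V i)]
    (hV : OrthogonalFamily 𝕜 (fun i => V i) fun i => (V i).subtypeₗᵢ) (hsp : (⨆ i, V i)ᗮ = ⊥) :
    ∃ (I : Type (max u v)) (b : HilbertBasis I 𝕜 E), ∀ j, ∃ i, b j ∈ V i := by
  choose w b _ using fun i => exists_hilbertBasis 𝕜 (V i)
  let f : (Σ i, w i) → E := fun a => b a.1 a.2
  have hf : Orthonormal 𝕜 f := hV.orthonormal_sigma_orthonormal fun i => (b i).orthonormal
  have hfsp : (span 𝕜 (range f))ᗮ = ⊥ := by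
    rw [← orthogonal_closure, eq_bot_iff, ← hsp]
    refine orthogonal_le (iSup_le fun i => (b i).le_topologicalClosure_span_coe.trans ?_)
    refine topologicalClosure_mono (span_mono ?_)
    rintro _ ⟨j, rfl⟩
    exact ⟨⟨i, j⟩, rfl⟩
  refine ⟨_, HilbertBasis.mkOfOrthogonalEqBot hf hfsp, fun a => ⟨a.1, ?_⟩⟩
  rw [HilbertBasis.coe_mkOfOrthogonalEqBot]
  exact (b a.1 a.2).2

theorem ContinuousLinearMap.exists_hilbertBasis_eigenvectors [CompleteSpace E] {T : E →L[𝕜] E}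
    (hT : IsCompactOperator T) (hT' : (T : E →ₗ[𝕜] E).IsSymmetric) :
    ∃ (I : Type (max u w)) (b : HilbertBasis I 𝕜 E), ∀ i, ∃ μ : 𝕜, T (b i) = μ • b i := by
  have hclosed : ∀ μ : 𝕜, IsClosed (eigenspace (T : E →ₗ[𝕜] E) μ : Set E) := fun μ => by
    rw [show (eigenspace (T : E →ₗ[𝕜] E) μ : Set E) = {x | T x = μ • x} from
      Set.ext fun _ => mem_eigenspace_iff]
    exact isClosed_eq T.continuous (continuous_const_smul μ)
  have := fun μ => (hclosed μ).completeSpace_coe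
  obtain ⟨I, b, hb⟩ := hT'.orthogonalFamily_eigenspaces.exists_hilbertBasis_subordinate
    (orthogonalComplement_iSup_eigenspaces_eq_bot hT hT')
  exact ⟨I, b, fun i => (hb i).imp fun μ => mem_eigenspace_iff.mp⟩

section InnerEqInner

variable {F : Type*} [NormedAddCommGroup F] [InnerProductSpace 𝕜 F] {A : E →L[𝕜] F}
  {K : E →L[𝕜] E}

theorem isSymmetric_of_inner_eq_inner (hK : ∀ u v, ⟪K u, v⟫_𝕜 = ⟪A u, A v⟫_𝕜) :
    (K : E →ₗ[𝕜] E).IsSymmetric := fun u v => by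
  rw [ContinuousLinearMap.coe_coe, hK, ← inner_conj_symm u, hK, inner_conj_symm]

theorem eq_adjoint_comp_self_of_inner_eq_inner [CompleteSpace E] [CompleteSpace F]
    (hK : ∀ u v, ⟪K u, v⟫_𝕜 = ⟪A u, A v⟫_𝕜) : K = A† ∘L A := by
  ext u
  refine ext_inner_right 𝕜 fun v => ?_
  rw [hK, ContinuousLinearMap.comp_apply, ContinuousLinearMap.adjoint_inner_left]

theorem isCompactOperator_of_inner_eq_inner [CompleteSpace E] [CompleteSpace F]
    (hA : IsCompactOperator A) (hK : ∀ u v, ⟪K u, v⟫_𝕜 = ⟪A u, A v⟫_𝕜) :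
    IsCompactOperator K := by
  rw [eq_adjoint_comp_self_of_inner_eq_inner hK]
  exact hA.clm_comp (A†)

theorem eigenvalue_eq_norm_sq_of_inner_eq_inner (hK : ∀ u v, ⟪K u, v⟫_𝕜 = ⟪A u, A v⟫_𝕜)
    {x : E} {μ : 𝕜} (hx : K x = μ • x) (hx1 : ‖x‖ = 1) : μ = ((‖A x‖ ^ 2 : ℝ) : 𝕜) := by
  have h := hK x x
  rw [hx, inner_smul_left, inner_self_eq_norm_sq_to_K, inner_self_eq_norm_sq_to_K, hx1] at h
  simpa using congrArg (starRingEnd 𝕜) h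

end InnerEqInner

theorem stmt5 {Hp H0 : Type*} [NormedAddCommGroup Hp] [InnerProductSpace ℂ Hp] [CompleteSpace Hp]
    [NormedAddCommGroup H0] [InnerProductSpace ℂ H0] [CompleteSpace H0]
    (ι : Hp →L[ℂ] H0) (hinj : Function.Injective ι) (hcomp : IsCompactOperator ι)
    (K : Hp →L[ℂ] Hp) (hK : ∀ u v : Hp, ⟪K u, v⟫ = ⟪ι u, ι v⟫) :
    ∃ (I : Type) (b : HilbertBasis I ℂ Hp) (μ : I → ℝ),
      (∀ i, 0 < μ i) ∧ ∀ i, K (b i) = (μ i : ℂ) • b i := by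
  have hKcomp := isCompactOperator_of_inner_eq_inner hcomp hK
  obtain ⟨I, b, hb⟩ := K.exists_hilbertBasis_eigenvectors hKcomp (isSymmetric_of_inner_eq_inner hK)
  set μ : I → ℝ := fun i => ‖ι (b i)‖ ^ 2
  have hKb : ∀ i, K (b i) = (μ i : ℂ) • b i := fun i => by
    obtain ⟨c, hc⟩ := hb i
    rwa [eigenvalue_eq_norm_sq_of_inner_eq_inner hK hc (b.orthonormal.1 i)] at hc
  have hμ : ∀ i, 0 < μ i := fun i =>
    pow_pos (norm_pos_iff.mpr ((map_ne_zero_iff ι hinj).mpr (b.orthonormal.ne_zero i))) 2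
  have hb_range : range b ⊆ range K := by
    rintro _ ⟨i, rfl⟩
    refine ⟨(μ i : ℂ)⁻¹ • b i, ?_⟩
    rw [map_smul, hKb, smul_smul, inv_mul_cancel₀ (by exact_mod_cast (hμ i).ne'), one_smul]
  have : Countable I :=
    b.orthonormal.countable_of_isSeparable (hKcomp.isSeparable_range.mono hb_range)
  refine ⟨Shrink I, b.reindex (equivShrink.{0} I), μ ∘ (equivShrink.{0} I).symm, fun i => hμ _,
    fun i => ?_⟩
  rw [b.reindex_apply]
  exact hKb _
end

section
/- Let H⁺ and H⁰ be complex Hilbert spaces and ι : H⁺ → H⁰ a continuous injective linear map with dense range. Suppose K : H⁺ → H⁺ is a continuous linear map satisfying ⟨K u, v⟩₊ = ⟨ι u, ι v⟩₀ for all u, v ∈ H⁺. Let (e_α) be an orthonormal family in H⁺ with K e_α = λ_α e_α, where each λ_α > 0. Then the family (ι e_α / √λ_α) is orthonormal in H⁰; and if (e_α) is a Hilbert basis of H⁺, then (ι e_α / √λ_α) is a Hilbert basis of H⁰. -/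
open scoped ComplexInnerProductSpace

theorem stmt6 {Hp H0 : Type*} [NormedAddCommGroup Hp] [InnerProductSpace ℂ Hp] [CompleteSpace Hp]
    [NormedAddCommGroup H0] [InnerProductSpace ℂ H0] [CompleteSpace H0]
    (ι : Hp →L[ℂ] H0) (hinj : Function.Injective ι) (hdense : DenseRange ι)
    (K : Hp →L[ℂ] Hp) (hK : ∀ u v : Hp, ⟪K u, v⟫ = ⟪ι u, ι v⟫)
    {α : Type*} (e : α → Hp) (he : Orthonormal ℂ e)
    (μ : α → ℝ) (hμ : ∀ a, 0 < μ a) (heig : ∀ a, K (e a) = (μ a : ℂ) • e a) :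
    Orthonormal ℂ (fun a => ((Real.sqrt (μ a) : ℂ))⁻¹ • ι (e a)) ∧
    (⊤ ≤ (Submodule.span ℂ (Set.range e)).topologicalClosure →
      ⊤ ≤ (Submodule.span ℂ
        (Set.range fun a => ((Real.sqrt (μ a) : ℂ))⁻¹ • ι (e a))).topologicalClosure) := by
  classical
  have hιe : ∀ a b, ⟪ι (e a), ι (e b)⟫ = (μ a : ℂ) * (if a = b then 1 else 0) := by
    intro a b
    rw [← hK, heig, inner_smul_left, orthonormal_iff_ite.mp he a b]
    simp [Complex.conj_ofReal]
  have hs : ∀ a, Real.sqrt (μ a) ≠ 0 := fun a =>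
    ne_of_gt (Real.sqrt_pos.mpr (hμ a))
  constructor
  · rw [orthonormal_iff_ite]
    intro a b
    simp only [inner_smul_left, inner_smul_right, hιe, map_inv₀, Complex.conj_ofReal]
    by_cases h : a = b
    · subst h
      simp only [if_pos rfl, mul_one]
      rw [show (μ a : ℂ) = (Real.sqrt (μ a) : ℂ) * (Real.sqrt (μ a) : ℂ) by
        rw [← Complex.ofReal_mul, Real.mul_self_sqrt (hμ a).le]]
      field_simp
      exact div_self (Complex.ofReal_ne_zero.mpr (hs a))
    · simp [h]
  · intro hbasis
    set f : α → H0 := fun a => ((Real.sqrt (μ a) : ℂ))⁻¹ • ι (e a) with hf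
    have hsub : ι '' Set.range e ⊆ (Submodule.span ℂ (Set.range f) : Set H0) := by
      rintro _ ⟨_, ⟨a, rfl⟩, rfl⟩
      have : ι (e a) = ((Real.sqrt (μ a) : ℂ)) • f a := by
        simp [hf, smul_smul, mul_inv_cancel₀ (by exact_mod_cast hs a : ((Real.sqrt (μ a) : ℂ)) ≠ 0)]
      rw [this]
      exact Submodule.smul_mem _ _ (Submodule.subset_span ⟨a, rfl⟩)
    have hmap : ι '' (Submodule.span ℂ (Set.range e) : Set Hp) ⊆
        (Submodule.span ℂ (Set.range f) : Set H0) := by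
      rintro _ ⟨x, hx, rfl⟩
      have : ι x ∈ Submodule.map (ι : Hp →ₗ[ℂ] H0) (Submodule.span ℂ (Set.range e)) :=
        ⟨x, hx, rfl⟩
      rw [Submodule.map_span] at this
      exact Submodule.span_le.mpr hsub this
    have hdense1 : Dense (Submodule.span ℂ (Set.range e) : Set Hp) := by
      intro x
      have := hbasis (Submodule.mem_top (x := x))
      exact this
    have hdense2 : Dense (ι '' (Submodule.span ℂ (Set.range e) : Set Hp)) :=
      hdense.dense_image ι.continuous hdense1
    have hdense3 : Dense (Submodule.span ℂ (Set.range f) : Set H0) :=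
      hdense2.mono hmap
    intro x _
    exact hdense3 x
end

section
/- Let u : ℝ^m → ℝ^m be twice continuously differentiable with compact support and let μ, λ be real constants. Then ∫_{ℝ^m} Σ_{i=1}^m u_i(x) · ( −μ Σ_{j=1}^m ∂_j(∂_j u_i − ∂_i u_j)(x) − (2μ+λ) ∂_i(div u)(x) ) dx = ∫_{ℝ^m} ( μ Σ_{1 ≤ i < j ≤ m} (∂_j u_i − ∂_i u_j)(x)² + (2μ+λ)(div u)(x)² ) dx. In particular, if μ > 0 and 2μ+λ > 0 and u satisfies −μΔu − (μ+λ)∇div u = 0, then ∂_j u_i − ∂_i u_j = 0 for all i, j and div u = 0 everywhere. -/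
open MeasureTheory

/-- The partial derivative `∂_j f` of a scalar function on `ℝ^m`. -/
noncomputable def pd {m : ℕ} (j : Fin m) (f : (Fin m → ℝ) → ℝ) (x : Fin m → ℝ) : ℝ :=
  fderiv ℝ f x (Pi.single j 1)

/-
Integrating by parts moves one derivative of the Lamé operator onto `u`: the vorticity part
`⟨u_i, -μ ∂_j rot_ij⟩` becomes `μ ∂_j u_i · rot_ij`, which summed over all `i, j` and
antisymmetrized is `μ ∑_{i<j} rot_ij²`, and `⟨u_i, -c ∂_i div u⟩` becomes `c (div u)²`.
By symmetry of second derivatives `∑_j ∂_j rot_ij = Δu_i - ∂_i div u`, so for a solution of the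
Lamé system the left-hand side vanishes. The right-hand side is then the integral of a continuous,
compactly supported, nonnegative function, which must vanish identically when `μ, 2μ + λ > 0`.
-/

open Finset

variable {m : ℕ}

section PartialDerivative

variable {f g : (Fin m → ℝ) → ℝ}

theorem ContDiff.pd {k n : WithTop ℕ∞} (hf : ContDiff ℝ k f) (hnk : n + 1 ≤ k) (j : Fin m) :
    ContDiff ℝ n (pd j f) :=
  (hf.fderiv_right hnk).clm_apply contDiff_const

theorem ContDiff.continuous_pd (hf : ContDiff ℝ 1 f) (j : Fin m) : Continuous (_root_.pd j f) :=
  (hf.pd (zero_add 1).le j).continuous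

theorem pd_eq_zero_of_notMem_tsupport {x : Fin m → ℝ} (hx : x ∉ tsupport f) (j : Fin m) :
    pd j f x = 0 := by
  simp [pd, fderiv_of_notMem_tsupport ℝ hx]

theorem HasCompactSupport.pd (hf : HasCompactSupport f) (j : Fin m) :
    HasCompactSupport (pd j f) :=
  (hf.fderiv (𝕜 := ℝ)).comp_left (g := fun L : (Fin m → ℝ) →L[ℝ] ℝ => L (Pi.single j 1)) rfl

theorem pd_fun_sub {x : Fin m → ℝ} (hf : DifferentiableAt ℝ f x) (hg : DifferentiableAt ℝ g x)
    (j : Fin m) : pd j (fun y => f y - g y) x = pd j f x - pd j g x := by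
  simp only [pd, fderiv_fun_sub hf hg, sub_apply]

theorem pd_fun_sum {ι : Type*} (s : Finset ι) {f : ι → (Fin m → ℝ) → ℝ} {x : Fin m → ℝ}
    (hf : ∀ i ∈ s, DifferentiableAt ℝ (f i) x) (j : Fin m) :
    pd j (fun y => ∑ i ∈ s, f i y) x = ∑ i ∈ s, pd j (f i) x := by
  simp only [pd, fderiv_fun_sum hf, FunLike.coe_sum, Finset.sum_apply]

theorem pd_pd_comm {x : Fin m → ℝ} (hf : ContDiffAt ℝ 2 f x) (i j : Fin m) :
    pd j (pd i f) x = pd i (pd j f) x := by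
  have hdiff : DifferentiableAt ℝ (fderiv ℝ f) x :=
    (hf.fderiv_right (m := 1) le_rfl).differentiableAt one_ne_zero
  have hsnd (k l : Fin m) :
      pd l (pd k f) x = fderiv ℝ (fderiv ℝ f) x (Pi.single l 1) (Pi.single k 1) := by
    change fderiv ℝ (fun y => fderiv ℝ f y (Pi.single k 1)) x (Pi.single l 1) = _
    rw [fderiv_clm_apply hdiff (differentiableAt_const _)]
    simp
  rw [hsnd, hsnd]
  exact hf.isSymmSndFDerivAt (by simp) _ _

theorem integral_mul_pd_eq_neg_integral_pd_mul (hf : ContDiff ℝ 1 f) (hg : ContDiff ℝ 1 g)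
    (hfc : HasCompactSupport f) (j : Fin m) :
    ∫ x, f x * pd j g x = -∫ x, pd j f x * g x := by
  apply integral_mul_fderiv_eq_neg_fderiv_mul_of_integrable
  · exact ((hf.continuous_pd j).mul hg.continuous).integrable_of_hasCompactSupport
      (hfc.pd j).mul_right
  · exact (hf.continuous.mul (hg.continuous_pd j)).integrable_of_hasCompactSupport hfc.mul_right
  · exact (hf.continuous.mul hg.continuous).integrable_of_hasCompactSupport hfc.mul_right
  · exact fun x _ => hf.differentiable one_ne_zero x
  · exact fun x _ => hg.differentiable one_ne_zero x

end PartialDerivative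

theorem sum_sum_eq_sum_sum_lt_add_swap {ι M : Type*} [Fintype ι] [LinearOrder ι]
    [AddCommMonoid M] (f : ι → ι → M) (hf : ∀ i, f i i = 0) :
    ∑ i, ∑ j, f i j = ∑ i, ∑ j with i < j, (f i j + f j i) := by
  have hsplit (i j : ι) :
      f i j = (if i < j then f i j else 0) + (if j < i then f i j else 0) := by
    rcases lt_trichotomy i j with h | rfl | h
    · simp [h, h.not_gt]
    · simp [hf]
    · simp [h, h.not_gt]
  calc ∑ i, ∑ j, f i j
      = ∑ i, ∑ j, (if i < j then f i j else 0) + ∑ i, ∑ j, (if j < i then f i j else 0) := by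
        simp_rw [← sum_add_distrib, ← hsplit]
    _ = ∑ i, ∑ j, (if i < j then f i j else 0) + ∑ i, ∑ j, (if i < j then f j i else 0) := by
        rw [sum_comm (f := fun i j => if j < i then f i j else 0)]
    _ = ∑ i, ∑ j with i < j, (f i j + f j i) := by
        simp_rw [← sum_add_distrib, ← ite_add_zero, ← sum_filter]

theorem sum_sum_mul_sub_swap_eq_sum_sum_lt_sq {ι R : Type*} [Fintype ι] [LinearOrder ι]
    [CommRing R] (b : ι → ι → R) :
    ∑ i, ∑ j, b i j * (b i j - b j i) = ∑ i, ∑ j with i < j, (b i j - b j i) ^ 2 := by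
  rw [sum_sum_eq_sum_sum_lt_add_swap _ fun i => by simp]
  congr! 2 with i - j -
  ring

noncomputable def rot (u : (Fin m → ℝ) → Fin m → ℝ) (i j : Fin m) : (Fin m → ℝ) → ℝ :=
  fun y => pd j (fun z => u z i) y - pd i (fun z => u z j) y

noncomputable def divergence (u : (Fin m → ℝ) → Fin m → ℝ) : (Fin m → ℝ) → ℝ :=
  fun y => ∑ j, pd j (fun z => u z j) y

theorem rot_swap (u : (Fin m → ℝ) → Fin m → ℝ) (i j : Fin m) (x : Fin m → ℝ) :
    rot u j i x = -rot u i j x :=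
  (neg_sub _ _).symm

noncomputable def energyDensity (μ c : ℝ) (u : (Fin m → ℝ) → Fin m → ℝ) (x : Fin m → ℝ) : ℝ :=
  μ * ∑ i, ∑ j with i < j, rot u i j x ^ 2 + c * divergence u x ^ 2

theorem energyDensity_nonneg {μ c : ℝ} (hμ : 0 ≤ μ) (hc : 0 ≤ c) (u : (Fin m → ℝ) → Fin m → ℝ)
    (x : Fin m → ℝ) : 0 ≤ energyDensity μ c u x := by
  unfold energyDensity
  positivity

theorem energyDensity_eq_sum_pd_mul (μ c : ℝ) (u : (Fin m → ℝ) → Fin m → ℝ) (x : Fin m → ℝ) :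
    energyDensity μ c u x = ∑ i, (μ * ∑ j, pd j (fun z => u z i) x * rot u i j x
        + c * (pd i (fun z => u z i) x * divergence u x)) := by
  rw [energyDensity, sum_add_distrib, ← mul_sum, ← mul_sum, ← sum_mul, sq (divergence u x)]
  congr 2
  exact (sum_sum_mul_sub_swap_eq_sum_sum_lt_sq fun i j => pd j (fun z => u z i) x).symm

theorem rot_eq_zero_and_divergence_eq_zero_of_energyDensity_eq_zero {μ c : ℝ} (hμ : 0 < μ)
    (hc : 0 < c) {u : (Fin m → ℝ) → Fin m → ℝ} {x : Fin m → ℝ} (h : energyDensity μ c u x = 0) :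
    (∀ i j, rot u i j x = 0) ∧ divergence u x = 0 := by
  obtain ⟨hrot, hdiv⟩ := (add_eq_zero_iff_of_nonneg (by positivity) (by positivity)).1 h
  have hlt {i j : Fin m} (hij : i < j) : rot u i j x = 0 := by
    have hsum := (mul_eq_zero.1 hrot).resolve_left hμ.ne'
    rw [sum_eq_zero_iff_of_nonneg fun i _ => by positivity] at hsum
    simpa using (sum_eq_zero_iff_of_nonneg fun j _ => by positivity).1 (hsum i (mem_univ i)) j
      (mem_filter.2 ⟨mem_univ j, hij⟩)
  refine ⟨fun i j => ?_, by simpa [hc.ne'] using hdiv⟩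
  rcases lt_trichotomy i j with hij | rfl | hij
  · exact hlt hij
  · exact sub_self _
  · rw [rot_swap, hlt hij, neg_zero]

theorem integral_sum_mul_sum_add_mul {X ι κ : Type*} [MeasurableSpace X] {ν : Measure X}
    [Fintype ι] [Fintype κ] {f : ι → κ → X → ℝ} {g : ι → X → ℝ}
    (hf : ∀ i j, Integrable (f i j) ν) (hg : ∀ i, Integrable (g i) ν) (a b : ℝ) :
    ∫ x, ∑ i, (a * ∑ j, f i j x + b * g i x) ∂ν
      = ∑ i, (a * ∑ j, ∫ x, f i j x ∂ν + b * ∫ x, g i x ∂ν) := by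
  have hfi (i : ι) : Integrable (fun x => ∑ j, f i j x) ν :=
    integrable_finsetSum _ fun j _ => hf i j
  have hterm (i : ι) : Integrable (fun x => a * ∑ j, f i j x + b * g i x) ν :=
    ((hfi i).const_mul a).add ((hg i).const_mul b)
  rw [integral_finsetSum _ fun i _ => hterm i]
  refine sum_congr rfl fun i _ => ?_
  rw [integral_add ((hfi i).const_mul a) ((hg i).const_mul b), integral_const_mul,
    integral_const_mul, integral_finsetSum _ fun j _ => hf i j]

section Lame

variable {u : (Fin m → ℝ) → Fin m → ℝ}

theorem ContDiff.component {n : WithTop ℕ∞} (hu : ContDiff ℝ n u) (i : Fin m) :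
    ContDiff ℝ n fun z => u z i :=
  contDiff_pi.1 hu i

theorem ContDiff.rot (hu : ContDiff ℝ 2 u) (i j : Fin m) : ContDiff ℝ 1 (rot u i j) :=
  ((hu.component i).pd le_rfl j).sub ((hu.component j).pd le_rfl i)

theorem ContDiff.divergence (hu : ContDiff ℝ 2 u) : ContDiff ℝ 1 (divergence u) :=
  ContDiff.sum fun j _ => (hu.component j).pd le_rfl j

theorem pd_component_eq_zero_of_notMem_tsupport {x : Fin m → ℝ} (hx : x ∉ tsupport u)
    (i j : Fin m) : pd j (fun z => u z i) x = 0 :=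
  pd_eq_zero_of_notMem_tsupport
    (fun h => hx (tsupport_comp_subset (g := fun w : Fin m → ℝ => w i) rfl _ h)) j

theorem HasCompactSupport.component (hsupp : HasCompactSupport u) (i : Fin m) :
    HasCompactSupport fun z => u z i :=
  hsupp.comp_left (g := fun w : Fin m → ℝ => w i) rfl

theorem rot_eq_zero_of_notMem_tsupport {x : Fin m → ℝ} (hx : x ∉ tsupport u) (i j : Fin m) :
    rot u i j x = 0 := by
  simp [rot, pd_component_eq_zero_of_notMem_tsupport hx]

theorem divergence_eq_zero_of_notMem_tsupport {x : Fin m → ℝ} (hx : x ∉ tsupport u) :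
    divergence u x = 0 := by
  simp [divergence, pd_component_eq_zero_of_notMem_tsupport hx]

theorem HasCompactSupport.rot (hsupp : HasCompactSupport u) (i j : Fin m) :
    HasCompactSupport (rot u i j) :=
  hsupp.mono' <| Function.support_subset_iff'.2 fun _ hx => rot_eq_zero_of_notMem_tsupport hx i j

theorem HasCompactSupport.divergence (hsupp : HasCompactSupport u) :
    HasCompactSupport (divergence u) :=
  hsupp.mono' <| Function.support_subset_iff'.2 fun _ hx => divergence_eq_zero_of_notMem_tsupport hx

theorem sum_pd_rot (hu : ContDiff ℝ 2 u) (i : Fin m) (x : Fin m → ℝ) :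
    ∑ j, pd j (rot u i j) x = ∑ j, pd j (pd j fun z => u z i) x - pd i (divergence u) x := by
  have hdiff (k l : Fin m) : DifferentiableAt ℝ (pd l fun z => u z k) x :=
    ((hu.component k).pd le_rfl l).differentiable one_ne_zero x
  unfold divergence
  rw [pd_fun_sum _ fun j _ => hdiff j j, ← sum_sub_distrib]
  refine sum_congr rfl fun j _ => ?_
  unfold rot
  rw [pd_fun_sub (hdiff i j) (hdiff j i), pd_pd_comm (hu.component j).contDiffAt]

theorem lame_green_identity (hu : ContDiff ℝ 2 u) (hsupp : HasCompactSupport u) (μ c : ℝ) :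
    ∫ x, ∑ i, u x i * (-μ * ∑ j, pd j (rot u i j) x - c * pd i (divergence u) x)
      = ∫ x, energyDensity μ c u x := by
  have hu₁ (i : Fin m) : ContDiff ℝ 1 fun z => u z i := (hu.component i).of_le one_le_two
  have hintegrable {f g : (Fin m → ℝ) → ℝ} (hf : Continuous f) (hg : Continuous g)
      (hfc : HasCompactSupport f) : Integrable fun x => f x * g x :=
    (hf.mul hg).integrable_of_hasCompactSupport hfc.mul_right
  calc _ = ∫ x, ∑ i, (-μ * ∑ j, u x i * pd j (rot u i j) x
          + -c * (u x i * pd i (divergence u) x)) := by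
        congr 1 with x
        refine sum_congr rfl fun i _ => ?_
        rw [← mul_sum]
        ring
    _ = ∑ i, (-μ * ∑ j, (∫ x, u x i * pd j (rot u i j) x)
          + -c * ∫ x, u x i * pd i (divergence u) x) :=
        integral_sum_mul_sum_add_mul
          (fun i j => hintegrable (hu₁ i).continuous ((hu.rot i j).continuous_pd j)
            (hsupp.component i))
          (fun i => hintegrable (hu₁ i).continuous (hu.divergence.continuous_pd i)
            (hsupp.component i))
          _ _
    _ = ∑ i, (μ * ∑ j, (∫ x, pd j (fun z => u z i) x * rot u i j x)
          + c * ∫ x, pd i (fun z => u z i) x * divergence u x) := by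
        simp only [integral_mul_pd_eq_neg_integral_pd_mul (hu₁ _) (hu.rot _ _) (hsupp.component _),
          integral_mul_pd_eq_neg_integral_pd_mul (hu₁ _) hu.divergence (hsupp.component _),
          sum_neg_distrib, neg_mul_neg]
    _ = ∫ x, ∑ i, (μ * ∑ j, pd j (fun z => u z i) x * rot u i j x
          + c * (pd i (fun z => u z i) x * divergence u x)) :=
        (integral_sum_mul_sum_add_mul
          (fun i j => hintegrable ((hu₁ i).continuous_pd j) (hu.rot i j).continuous
            ((hsupp.component i).pd j))
          (fun i => hintegrable ((hu₁ i).continuous_pd i) hu.divergence.continuous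
            ((hsupp.component i).pd i))
          _ _).symm
    _ = _ := by simp_rw [energyDensity_eq_sum_pd_mul]

theorem continuous_energyDensity (hu : ContDiff ℝ 2 u) (μ c : ℝ) :
    Continuous (energyDensity μ c u) := by
  have hrot (i j : Fin m) := (hu.rot i j).continuous
  have hdiv := hu.divergence.continuous
  unfold energyDensity
  fun_prop

theorem HasCompactSupport.energyDensity (hsupp : HasCompactSupport u) (μ c : ℝ) :
    HasCompactSupport (energyDensity μ c u) :=
  hsupp.mono' <| Function.support_subset_iff'.2 fun _ hx => by
    simp [_root_.energyDensity, rot_eq_zero_of_notMem_tsupport hx,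
      divergence_eq_zero_of_notMem_tsupport hx]

theorem rot_eq_zero_and_divergence_eq_zero_of_lame (hu : ContDiff ℝ 2 u)
    (hsupp : HasCompactSupport u) {μ lam : ℝ} (hμ : 0 < μ) (hc : 0 < 2 * μ + lam)
    (hlame : ∀ x i,
      -μ * ∑ j, pd j (pd j fun z => u z i) x - (μ + lam) * pd i (divergence u) x = 0) :
    (∀ x i j, rot u i j x = 0) ∧ ∀ x, divergence u x = 0 := by
  have hintegral : ∫ x, energyDensity μ (2 * μ + lam) u x = 0 := by
    have hpointwise (x : Fin m → ℝ) (i : Fin m) :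
        -μ * ∑ j, pd j (rot u i j) x - (2 * μ + lam) * pd i (divergence u) x = 0 := by
      rw [sum_pd_rot hu]
      linear_combination hlame x i
    rw [← lame_green_identity hu hsupp]
    simp only [hpointwise, mul_zero, sum_const_zero, integral_zero]
  have hzero (x : Fin m → ℝ) : energyDensity μ (2 * μ + lam) u x = 0 := by
    by_contra hx
    have := (continuous_energyDensity hu _ _).integral_pos_of_hasCompactSupport_nonneg_nonzero
      (μ := volume) (hsupp.energyDensity _ _) (energyDensity_nonneg hμ.le hc.le u) hx
    linarith
  exact forall_and.1 fun x =>
    rot_eq_zero_and_divergence_eq_zero_of_energyDensity_eq_zero hμ hc (hzero x)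

end Lame

/-- Green-type identity for the factorization of the Lamé operator through the vorticity
`rot_m` and the divergence, and the resulting vanishing of `rot u` and `div u` for
solutions of the Lamé system. -/
theorem stmt13 {m : ℕ} (u : (Fin m → ℝ) → (Fin m → ℝ)) (hu : ContDiff ℝ 2 u)
    (hsupp : HasCompactSupport u) (μ lam : ℝ) :
    (∫ x : Fin m → ℝ, ∑ i, u x i *
        (-μ * ∑ j, pd j (fun y => pd j (fun z => u z i) y - pd i (fun z => u z j) y) x
          - (2 * μ + lam) * pd i (fun y => ∑ j, pd j (fun z => u z j) y) x)
      = ∫ x : Fin m → ℝ,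
          (μ * ∑ i, ∑ j ∈ Finset.univ.filter (fun j => i < j),
              (pd j (fun z => u z i) x - pd i (fun z => u z j) x) ^ 2
            + (2 * μ + lam) * (∑ j, pd j (fun z => u z j) x) ^ 2)) ∧
    (0 < μ → 0 < 2 * μ + lam →
      (∀ (x : Fin m → ℝ) (i : Fin m),
        -μ * ∑ j, pd j (fun y => pd j (fun z => u z i) y) x
          - (μ + lam) * pd i (fun y => ∑ j, pd j (fun z => u z j) y) x = 0) →
      (∀ (x : Fin m → ℝ) (i j : Fin m),
          pd j (fun z => u z i) x - pd i (fun z => u z j) x = 0) ∧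
      (∀ x : Fin m → ℝ, ∑ j, pd j (fun z => u z j) x = 0)) :=
  ⟨lame_green_identity hu hsupp μ (2 * μ + lam),
    fun hμ hc hlame => rot_eq_zero_and_divergence_eq_zero_of_lame hu hsupp hμ hc hlame⟩
end

section
/- Let 0 < ε ≤ 1 and define F(w) = Σ_{ν=0}^∞ w^{4ν} / (4ν+1)^{(1+ε)/2} for w in the open unit disk 𝔻 ⊂ ℂ. Then the series converges and F is holomorphic on 𝔻; F is square-integrable on 𝔻, i.e. ∫_𝔻 |F(w)|² dA(w) = π Σ_{ν=0}^∞ (4ν+1)^{−(2+ε)} < ∞; but its derivative is not square-integrable: ∫_𝔻 |F′(w)|² dA(w) = π Σ_{ν=1}^∞ 4ν (4ν+1)^{−(1+ε)} = ∞. (Hence F belongs to L² of the disk but not to the Sobolev space H¹ of the disk, which shows the sharpness of the embedding of the non-coercive energy space on the Sobolev scale.) -/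
open MeasureTheory Metric

/-- `F(w) = Σ_{ν=0}^∞ w^{4ν}/(4ν+1)^{(1+ε)/2}`. -/
noncomputable def F (ε : ℝ) (w : ℂ) : ℂ :=
  ∑' ν : ℕ, w ^ (4 * ν) / (((4 * (ν : ℝ) + 1) ^ ((1 + ε) / 2) : ℝ) : ℂ)

/-!
For a power series `g w = ∑ bₙ w ^ eₙ` with distinct exponents, polar coordinates write
`∫_𝔻 |g|²` as `∫₀¹ r ∫_{-π}^{π} |g (r e^{iθ})|² dθ dr`. Orthogonality of the characters
`e^{ikθ}` turns the inner integral into `2π ∑ |bₙ|² r^{2eₙ}`, and integrating in `r` gives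
`π ∑ |bₙ|² / (eₙ + 1)`. For `F` these terms are `(4ν+1)^{-(2+ε)}`, a convergent series; for
`F' = ∑ 4ν c_ν w^{4ν-1}` they are `4ν (4ν+1)^{-(1+ε)} ≍ ν^{-ε}`, which diverges for `ε ≤ 1`.
-/

open Set Complex
open scoped Real ENNReal ComplexConjugate

lemma integral_Ioo_conj_exp_pow_mul_exp_pow (m n : ℕ) :
    ∫ θ in Ioo (-π) π, conj (exp (θ * I) ^ m) * exp (θ * I) ^ n =
      if m = n then ((2 * π : ℝ) : ℂ) else 0 := by
  have hexp : ∀ θ : ℝ, conj (exp (θ * I) ^ m) * exp (θ * I) ^ n = exp (((n - m : ℤ) * I) * θ) := by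
    intro θ
    rw [map_pow, ← exp_conj, map_mul, conj_ofReal, conj_I, ← exp_nat_mul, ← exp_nat_mul,
      ← exp_add]
    push_cast
    ring_nf
  simp_rw [hexp, ← integral_Ioc_eq_integral_Ioo,
    ← intervalIntegral.integral_of_le (neg_le_self Real.pi_pos.le)]
  split_ifs with hmn
  · simp [hmn]
    ring
  · have hc : ((n - m : ℤ) : ℂ) * I ≠ 0 := by
      refine mul_ne_zero ?_ I_ne_zero
      exact_mod_cast sub_ne_zero.mpr (Int.natCast_inj.not.mpr (Ne.symm hmn))
    rw [integral_exp_mul_complex hc, div_eq_zero_iff, sub_eq_zero]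
    left
    have hperiod : ((n - m : ℤ) : ℂ) * I * ((π : ℝ) : ℂ) =
        ((n - m : ℤ) : ℂ) * I * ((-π : ℝ) : ℂ) + (n - m : ℤ) * (2 * π * I) := by
      push_cast; ring
    rw [hperiod, exp_add, exp_int_mul_two_pi_mul_I, mul_one]

section Parseval

variable {c : ℕ → ℂ} {e : ℕ → ℕ}

lemma continuous_tsum_mul_exp_pow (hc : Summable (‖c ·‖)) :
    Continuous fun θ : ℝ => ∑' n, c n * exp (θ * I) ^ e n :=
  continuous_tsum (fun n => by fun_prop) hc
    fun n θ => by simp [norm_exp_ofReal_mul_I]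

lemma integral_Ioo_conj_exp_pow_mul_tsum (he : e.Injective) (hc : Summable (‖c ·‖)) (m : ℕ) :
    ∫ θ in Ioo (-π) π, conj (exp (θ * I) ^ e m) * ∑' n, c n * exp (θ * I) ^ e n =
      2 * π * c m := by
  have hint : ∀ n, Integrable (fun θ : ℝ => c n * (conj (exp (θ * I) ^ e m) * exp (θ * I) ^ e n))
      (volume.restrict (Ioo (-π) π)) := fun n =>
    ((by fun_prop : Continuous fun θ : ℝ =>
      c n * (conj (exp (θ * I) ^ e m) * exp (θ * I) ^ e n)).integrableOn_Icc).mono_set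
      Ioo_subset_Icc_self
  have hnorm : Summable fun n => ∫ θ in Ioo (-π) π,
      ‖c n * (conj (exp (θ * I) ^ e m) * exp (θ * I) ^ e n)‖ := by
    simpa [norm_exp_ofReal_mul_I] using hc.mul_left (volume.real (Ioo (-π) π))
  calc _ = ∫ θ in Ioo (-π) π, ∑' n, c n * (conj (exp (θ * I) ^ e m) * exp (θ * I) ^ e n) := by
        congr 1 with θ
        rw [← tsum_mul_left]
        exact tsum_congr fun n => by ring
    _ = ∑' n, c n * if e m = e n then ((2 * π : ℝ) : ℂ) else 0 := by
        rw [← integral_tsum_of_summable_integral_norm hint hnorm]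
        simp_rw [integral_const_mul, integral_Ioo_conj_exp_pow_mul_exp_pow]
    _ = 2 * π * c m := by
        simp_rw [he.eq_iff, mul_ite, mul_zero, eq_comm (a := m)]
        rw [tsum_ite_eq]
        push_cast; ring

lemma integral_Ioo_norm_tsum_mul_exp_pow_sq (he : e.Injective) (hc : Summable (‖c ·‖)) :
    ∫ θ in Ioo (-π) π, ‖∑' n, c n * exp (θ * I) ^ e n‖ ^ 2 = 2 * π * ∑' n, ‖c n‖ ^ 2 := by
  set G := fun θ : ℝ => ∑' n, c n * exp (θ * I) ^ e n
  have hG : Continuous G := continuous_tsum_mul_exp_pow hc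
  have hint : ∀ n, Integrable (fun θ : ℝ => conj (c n) * (conj (exp (θ * I) ^ e n) * G θ))
      (volume.restrict (Ioo (-π) π)) := fun n =>
    ((by fun_prop : Continuous fun θ : ℝ =>
      conj (c n) * (conj (exp (θ * I) ^ e n) * G θ)).integrableOn_Icc).mono_set
      Ioo_subset_Icc_self
  have hnorm : Summable fun n => ∫ θ in Ioo (-π) π,
      ‖conj (c n) * (conj (exp (θ * I) ^ e n) * G θ)‖ := by
    simpa [norm_exp_ofReal_mul_I, integral_const_mul] using
      hc.mul_right (∫ θ in Ioo (-π) π, ‖G θ‖)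
  apply ofReal_injective
  calc ((∫ θ in Ioo (-π) π, ‖G θ‖ ^ 2 : ℝ) : ℂ)
      = ∫ θ in Ioo (-π) π, ∑' n, conj (c n) * (conj (exp (θ * I) ^ e n) * G θ) := by
        rw [← integral_complex_ofReal]
        congr 1 with θ
        rw [ofReal_pow, ← conj_mul', conj_tsum, ← tsum_mul_right]
        exact tsum_congr fun n => by rw [map_mul]; ring
    _ = ∑' n, conj (c n) * (2 * π * c n) := by
        rw [← integral_tsum_of_summable_integral_norm hint hnorm]
        simp_rw [integral_const_mul, G, integral_Ioo_conj_exp_pow_mul_tsum he hc]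
    _ = ((2 * π * ∑' n, ‖c n‖ ^ 2 : ℝ) : ℂ) := by
        push_cast
        rw [← tsum_mul_left]
        exact tsum_congr fun n => by rw [← conj_mul']; ring

end Parseval

lemma polarCoord_symm_eq_mul_exp (p : ℝ × ℝ) :
    Complex.polarCoord.symm p = p.1 * exp (p.2 * I) := by
  rw [Complex.polarCoord_symm_apply, exp_mul_I, ← ofReal_cos, ← ofReal_sin]

lemma lintegral_ball_zero_one_eq_polar (f : ℂ → ℝ≥0∞) (hf : ContinuousOn f (ball 0 1)) :
    ∫⁻ w in ball 0 1, f w =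
      ∫⁻ r in Ioo 0 1, ENNReal.ofReal r * ∫⁻ θ in Ioo (-π) π, f (r * exp (θ * I)) := by
  set T : Set (ℝ × ℝ) := Ioo 0 1 ×ˢ Ioo (-π) π
  have hT : MeasurableSet T := measurableSet_Ioo.prod measurableSet_Ioo
  have hT_sub : T ⊆ polarCoord.target := by
    rw [polarCoord_target]
    exact prod_mono Ioo_subset_Ioi_self le_rfl
  have hmaps : MapsTo (fun p : ℝ × ℝ => (p.1 : ℂ) * exp (p.2 * I)) T (ball 0 1) := by
    intro p hp
    simpa [norm_exp_ofReal_mul_I, abs_of_pos hp.1.1] using hp.1.2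
  have hpolar : ∫⁻ w in ball 0 1, f w =
      ∫⁻ p in T, ENNReal.ofReal p.1 * f (p.1 * exp (p.2 * I)) := by
    rw [← lintegral_indicator measurableSet_ball, ← Complex.lintegral_comp_polarCoord_symm,
      ← lintegral_indicator hT, ← lintegral_indicator polarCoord.open_target.measurableSet]
    congr 1 with p
    simp only [polarCoord_symm_eq_mul_exp]
    by_cases hp : p ∈ T
    · rw [indicator_of_mem (hT_sub hp), indicator_of_mem hp, indicator_of_mem (hmaps hp),
        smul_eq_mul]
    · rw [indicator_of_notMem hp, indicator_apply_eq_zero]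
      rintro ⟨hr, hθ⟩
      have hr1 : ¬ p.1 < 1 := fun hr1 => hp ⟨⟨hr, hr1⟩, hθ⟩
      have hnot : (p.1 : ℂ) * exp (p.2 * I) ∉ ball 0 1 := by
        simpa [norm_exp_ofReal_mul_I, abs_of_pos (mem_Ioi.mp hr)] using hr1
      rw [indicator_of_notMem hnot, smul_zero]
  have hmeas : AEMeasurable (fun p : ℝ × ℝ => ENNReal.ofReal p.1 * f (p.1 * exp (p.2 * I)))
      ((volume.restrict (Ioo 0 1)).prod (volume.restrict (Ioo (-π) π))) := by
    rw [Measure.prod_restrict, ← Measure.volume_eq_prod]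
    exact measurable_fst.ennreal_ofReal.aemeasurable.mul
      ((hf.comp (by fun_prop) hmaps).aemeasurable hT)
  rw [hpolar, Measure.volume_eq_prod, ← Measure.prod_restrict, lintegral_prod _ hmeas]
  simp_rw [lintegral_const_mul' _ _ ENNReal.ofReal_ne_top]

lemma lintegral_Ioo_zero_one_ofReal_pow (k : ℕ) :
    ∫⁻ r in Ioo (0 : ℝ) 1, ENNReal.ofReal (r ^ k) = ENNReal.ofReal (1 / (k + 1)) := by
  rw [← ofReal_integral_eq_lintegral_ofReal, ← integral_Ioc_eq_integral_Ioo,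
    ← intervalIntegral.integral_of_le zero_le_one, integral_pow]
  · simp
  · exact (continuous_pow k).integrableOn_Icc.mono_set Ioo_subset_Icc_self
  · filter_upwards [ae_restrict_mem measurableSet_Ioo] with r hr using pow_nonneg hr.1.le k

lemma Summable.sq_of_nonneg {ι : Type*} {u : ι → ℝ} (h0 : ∀ i, 0 ≤ u i) (hu : Summable u) :
    Summable fun i => u i ^ 2 :=
  (hu.mul_left (∑' i, u i)).of_nonneg_of_le (fun i => sq_nonneg _) fun i => by
    rw [sq]
    exact mul_le_mul_of_nonneg_right (hu.le_tsum i fun j _ => h0 j) (h0 i)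

section LacunarySeries

variable {b : ℕ → ℂ} {e : ℕ → ℕ}

lemma lintegral_Ioo_enorm_tsum_mul_pow_sq (he : e.Injective) {r : ℝ} (hr : 0 ≤ r)
    (hb : Summable fun n => ‖b n‖ * r ^ e n) :
    ∫⁻ θ in Ioo (-π) π, ‖∑' n, b n * (r * exp (θ * I)) ^ e n‖ₑ ^ 2 =
      ENNReal.ofReal (2 * π * ∑' n, ‖b n‖ ^ 2 * r ^ (2 * e n)) := by
  have hc : Summable fun n => ‖b n * r ^ e n‖ := by
    simpa [abs_of_nonneg hr] using hb
  have hsq : ∑' n, ‖b n‖ ^ 2 * r ^ (2 * e n) = ∑' n, ‖b n * r ^ e n‖ ^ 2 := by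
    simp [mul_pow, pow_mul', abs_of_nonneg hr]
  simp_rw [mul_pow, ← mul_assoc]
  rw [hsq, ← integral_Ioo_norm_tsum_mul_exp_pow_sq he hc, ofReal_integral_eq_lintegral_ofReal]
  · simp_rw [ENNReal.ofReal_pow (norm_nonneg _), ofReal_norm]
  · exact ((continuous_tsum_mul_exp_pow hc).norm.pow 2).integrableOn_Icc.mono_set
      Ioo_subset_Icc_self
  · exact ae_of_all _ fun θ => sq_nonneg _

lemma lintegral_ball_enorm_sq_eq_tsum (he : e.Injective)
    (hb : ∀ r : ℝ, 0 ≤ r → r < 1 → Summable fun n => ‖b n‖ * r ^ e n)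
    {g : ℂ → ℂ} (hg : ∀ w ∈ ball (0 : ℂ) 1, g w = ∑' n, b n * w ^ e n)
    (hgc : ContinuousOn g (ball 0 1)) :
    ∫⁻ w in ball (0 : ℂ) 1, ‖g w‖ₑ ^ 2 =
      ENNReal.ofReal π * ∑' n, ENNReal.ofReal (‖b n‖ ^ 2 / (e n + 1)) := by
  have hsq : ∀ r : ℝ, 0 ≤ r → r < 1 → Summable fun n => ‖b n‖ ^ 2 * r ^ (2 * e n) :=
    fun r hr0 hr1 => by
      simpa [mul_pow, pow_mul'] using (hb r hr0 hr1).sq_of_nonneg fun n => by positivity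
  have hradial : ∀ r ∈ Ioo (0 : ℝ) 1,
      ENNReal.ofReal r * ∫⁻ θ in Ioo (-π) π, ‖g (r * exp (θ * I))‖ₑ ^ 2 =
        ∑' n, ENNReal.ofReal (2 * π * ‖b n‖ ^ 2) * ENNReal.ofReal (r ^ (2 * e n + 1)) := by
    rintro r ⟨hr0, hr1⟩
    have hmem : ∀ θ : ℝ, (r : ℂ) * exp (θ * I) ∈ ball (0 : ℂ) 1 := fun θ => by
      simpa [norm_exp_ofReal_mul_I, abs_of_pos hr0] using hr1
    simp_rw [fun θ : ℝ => hg _ (hmem θ)]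
    rw [lintegral_Ioo_enorm_tsum_mul_pow_sq he hr0.le (hb r hr0.le hr1),
      ← ENNReal.ofReal_mul hr0.le,
      ← tsum_mul_left, ← tsum_mul_left, ENNReal.ofReal_tsum_of_nonneg]
    · congr 1 with n
      rw [← ENNReal.ofReal_mul (by positivity)]
      ring_nf
    · intro n; positivity
    · exact ((hsq r hr0.le hr1).mul_left _).mul_left _
  rw [lintegral_ball_zero_one_eq_polar (fun w => ‖g w‖ₑ ^ 2)
      ((ENNReal.continuous_pow 2).comp_continuousOn hgc.enorm),
    setLIntegral_congr_fun measurableSet_Ioo hradial, lintegral_tsum, ← ENNReal.tsum_mul_left]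
  · congr 1 with n
    rw [lintegral_const_mul' _ _ ENNReal.ofReal_ne_top, lintegral_Ioo_zero_one_ofReal_pow,
      ← ENNReal.ofReal_mul (by positivity), ← ENNReal.ofReal_mul Real.pi_pos.le]
    congr 1
    push_cast
    field_simp
    ring
  · intro n
    exact (by fun_prop : Measurable fun r : ℝ => ENNReal.ofReal (2 * π * ‖b n‖ ^ 2) *
      ENNReal.ofReal (r ^ (2 * e n + 1))).aemeasurable

lemma norm_mul_pow_le_of_mem_ball {ρ : ℝ} {w : ℂ} (hw : w ∈ ball (0 : ℂ) ρ) (n : ℕ) :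
    ‖b n * w ^ e n‖ ≤ ‖b n‖ * ρ ^ e n := by
  rw [norm_mul, norm_pow]
  exact mul_le_mul_of_nonneg_left
    (pow_le_pow_left₀ (norm_nonneg w) (mem_ball_zero_iff.mp hw).le _) (norm_nonneg _)

variable (hb : ∀ r : ℝ, 0 ≤ r → r < 1 → Summable fun n => ‖b n‖ * r ^ e n)
include hb

lemma differentiableOn_tsum_mul_pow :
    DifferentiableOn ℂ (fun w => ∑' n, b n * w ^ e n) (ball 0 1) := by
  intro z hz
  obtain ⟨ρ, hzρ, hρ1⟩ := exists_between (mem_ball_zero_iff.mp hz)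
  have hρ : DifferentiableOn ℂ (fun w => ∑' n, b n * w ^ e n) (ball 0 ρ) :=
    differentiableOn_tsum_of_summable_norm (hb ρ ((norm_nonneg z).trans hzρ.le) hρ1)
      (fun n => (differentiable_pow _).const_mul _ |>.differentiableOn) isOpen_ball
      fun n w hw => norm_mul_pow_le_of_mem_ball hw n
  exact (hρ.differentiableAt (isOpen_ball.mem_nhds (mem_ball_zero_iff.mpr hzρ)))
    |>.differentiableWithinAt

lemma summable_mul_pow_of_mem_ball {z : ℂ} (hz : z ∈ ball (0 : ℂ) 1) :
    Summable fun n => b n * z ^ e n :=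
  .of_norm <| by simpa using hb ‖z‖ (norm_nonneg z) (mem_ball_zero_iff.mp hz)

lemma hasSum_deriv_tsum_mul_pow {z : ℂ} (hz : z ∈ ball (0 : ℂ) 1) :
    HasSum (fun n => b n * e n * z ^ (e n - 1)) (deriv (fun w => ∑' n, b n * w ^ e n) z) := by
  obtain ⟨ρ, hzρ, hρ1⟩ := exists_between (mem_ball_zero_iff.mp hz)
  have := hasSum_deriv_of_summable_norm (hb ρ ((norm_nonneg z).trans hzρ.le) hρ1)
    (fun n => (differentiable_pow (e n)).const_mul (b n) |>.differentiableOn) isOpen_ball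
    (fun n w hw => norm_mul_pow_le_of_mem_ball hw n) (mem_ball_zero_iff.mpr hzρ)
  simpa [mul_assoc] using this

end LacunarySeries

lemma tsum_ofReal_eq_top_of_not_summable {ι : Type*} {f : ι → ℝ} (h0 : ∀ i, 0 ≤ f i)
    (hf : ¬ Summable f) : ∑' i, ENNReal.ofReal (f i) = ∞ := by
  contrapose! hf
  simpa [ENNReal.toReal_ofReal (h0 _)] using ENNReal.summable_toReal hf

lemma integrableOn_norm_sq_and_integral_eq_of_lintegral {α E : Type*} [MeasurableSpace α]
    [NormedAddCommGroup E] {μ : Measure α} {s : Set α} {f : α → E}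
    (hf : AEStronglyMeasurable f (μ.restrict s)) {a : ℝ} (ha : 0 ≤ a)
    (h : ∫⁻ x in s, ‖f x‖ₑ ^ 2 ∂μ = ENNReal.ofReal a) :
    IntegrableOn (fun x => ‖f x‖ ^ 2) s μ ∧ ∫ x in s, ‖f x‖ ^ 2 ∂μ = a := by
  have henorm : ∀ x, ENNReal.ofReal (‖f x‖ ^ 2) = ‖f x‖ₑ ^ 2 := fun x => by
    rw [ENNReal.ofReal_pow (norm_nonneg _), ofReal_norm]
  refine ⟨⟨hf.norm.pow 2, ?_⟩, ?_⟩
  · simp [HasFiniteIntegral, enorm_pow, h]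
  · rw [integral_eq_lintegral_of_nonneg_ae (ae_of_all _ fun x => sq_nonneg ‖f x‖)
      (hf.norm.pow 2)]
    simp_rw [henorm, h, ENNReal.toReal_ofReal ha]

noncomputable def coeffF (ε : ℝ) (ν : ℕ) : ℝ := ((4 * ν + 1 : ℝ) ^ ((1 + ε) / 2))⁻¹

lemma F_eq_tsum (ε : ℝ) : F ε = fun w => ∑' ν : ℕ, (coeffF ε ν : ℂ) * w ^ (4 * ν) := by
  funext w
  exact tsum_congr fun ν => by rw [coeffF, ofReal_inv, div_eq_inv_mul]

lemma coeffF_nonneg (ε : ℝ) (ν : ℕ) : 0 ≤ coeffF ε ν := by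
  unfold coeffF; positivity

lemma coeffF_le_one {ε : ℝ} (hε : -1 ≤ ε) (ν : ℕ) : coeffF ε ν ≤ 1 :=
  inv_le_one_of_one_le₀ (Real.one_le_rpow (by linarith [ν.cast_nonneg (α := ℝ)]) (by linarith))

lemma coeffF_sq (ε : ℝ) (ν : ℕ) : coeffF ε ν ^ 2 = (4 * ν + 1 : ℝ) ^ (-(1 + ε)) := by
  rw [coeffF, inv_pow, ← Real.rpow_natCast, ← Real.rpow_mul (by positivity),
    ← Real.rpow_neg (by positivity)]
  norm_num

lemma summable_norm_coeffF_mul_pow {ε : ℝ} (hε : -1 ≤ ε) (r : ℝ) (hr0 : 0 ≤ r) (hr1 : r < 1) :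
    Summable fun ν => ‖(coeffF ε ν : ℂ)‖ * r ^ (4 * ν) := by
  have hgeom := summable_geometric_of_lt_one (pow_nonneg hr0 4) (pow_lt_one₀ hr0 hr1 four_ne_zero)
  refine hgeom.of_nonneg_of_le (fun ν => by positivity) fun ν => ?_
  rw [norm_real, Real.norm_of_nonneg (coeffF_nonneg ε ν), ← pow_mul]
  exact mul_le_of_le_one_left (by positivity) (coeffF_le_one hε ν)

lemma summable_norm_coeffF_mul_deriv_mul_pow {ε : ℝ} (hε : -1 ≤ ε) (r : ℝ) (hr0 : 0 ≤ r)
    (hr1 : r < 1) :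
    Summable fun ν => ‖(coeffF ε ν : ℂ) * ((4 * ν : ℕ) : ℂ)‖ * r ^ (4 * ν - 1) := by
  have hgeom : Summable fun ν : ℕ => 4 * ((ν : ℝ) * r ^ ν) := by
    have := summable_pow_mul_geometric_of_norm_lt_one (R := ℝ) 1 (r := r)
      (by rwa [Real.norm_of_nonneg hr0])
    simpa using this.mul_left 4
  refine hgeom.of_nonneg_of_le (fun ν => by positivity) fun ν => ?_
  rw [norm_mul, norm_real, Real.norm_of_nonneg (coeffF_nonneg ε ν), norm_natCast]
  rcases Nat.eq_zero_or_pos ν with rfl | hν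
  · simp
  calc coeffF ε ν * ((4 * ν : ℕ) : ℝ) * r ^ (4 * ν - 1) ≤ 1 * ((4 * ν : ℕ) : ℝ) * r ^ ν := by
        gcongr ?_ * _ * ?_
        · exact coeffF_le_one hε ν
        · exact pow_le_pow_of_le_one hr0 hr1.le (by omega)
    _ = 4 * ((ν : ℝ) * r ^ ν) := by push_cast; ring

lemma norm_coeffF_sq_div (ε : ℝ) (ν : ℕ) :
    ‖(coeffF ε ν : ℂ)‖ ^ 2 / (((4 * ν : ℕ) : ℝ) + 1) = (4 * ν + 1 : ℝ) ^ (-(2 + ε)) := by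
  rw [norm_real, Real.norm_of_nonneg (coeffF_nonneg ε ν), coeffF_sq]
  push_cast
  rw [← Real.rpow_sub_one (by positivity)]
  ring_nf

lemma norm_coeffF_mul_sq_div (ε : ℝ) (ν : ℕ) :
    ‖(coeffF ε ν : ℂ) * ((4 * ν : ℕ) : ℂ)‖ ^ 2 / (((4 * ν - 1 : ℕ) : ℝ) + 1) =
      4 * ν * (4 * ν + 1 : ℝ) ^ (-(1 + ε)) := by
  rw [norm_mul, norm_real, Real.norm_of_nonneg (coeffF_nonneg ε ν), norm_natCast, mul_pow,
    coeffF_sq]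
  rcases Nat.eq_zero_or_pos ν with rfl | hν
  · simp
  rw [Nat.cast_sub (by omega)]
  push_cast
  field_simp
  ring

lemma summable_four_mul_add_one_rpow {p : ℝ} (hp : p < -1) :
    Summable fun ν : ℕ => (4 * ν + 1 : ℝ) ^ p := by
  refine ((summable_nat_add_iff 1).mpr (Real.summable_nat_rpow.mpr hp)).of_nonneg_of_le
    (fun ν => by positivity) fun ν => ?_
  exact Real.rpow_le_rpow_of_nonpos (by positivity) (by push_cast; linarith) (by linarith)

lemma not_summable_four_mul_mul_rpow {p : ℝ} (hp : -2 ≤ p) :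
    ¬ Summable fun ν : ℕ => 4 * ν * (4 * ν + 1 : ℝ) ^ p := by
  intro h
  refine Real.not_summable_natCast_inv ((summable_mul_left_iff (by norm_num : (4 / 25 : ℝ) ≠ 0)).mp
    (h.of_nonneg_of_le (fun ν => by positivity) fun ν => ?_))
  rcases Nat.eq_zero_or_pos ν with rfl | hν
  · simp
  have hν1 : (1 : ℝ) ≤ ν := by exact_mod_cast hν
  calc 4 / 25 * (ν : ℝ)⁻¹ ≤ 4 * ν * ((4 * ν + 1 : ℝ) ^ 2)⁻¹ := by
        rw [← div_eq_mul_inv, ← div_eq_mul_inv, div_le_div_iff₀ (by positivity) (by positivity)]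
        nlinarith
    _ = 4 * ν * (4 * ν + 1 : ℝ) ^ (-2 : ℝ) := by
        rw [Real.rpow_neg (by positivity), Real.rpow_two]
    _ ≤ 4 * ν * (4 * ν + 1 : ℝ) ^ p := by
        gcongr
        · linarith

/-- `F` is holomorphic on the unit disk and square-integrable there (with
`∫_𝔻 |F|² = π Σ (4ν+1)^{−(2+ε)} < ∞`), but its derivative is not square-integrable
(`∫_𝔻 |F′|² = π Σ 4ν(4ν+1)^{−(1+ε)} = ∞`): `F ∈ L²(𝔻)` but `F ∉ H¹(𝔻)`. -/
theorem stmt19 (ε : ℝ) (hε0 : 0 < ε) (hε1 : ε ≤ 1) :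
    (∀ w ∈ ball (0 : ℂ) 1,
      Summable fun ν : ℕ => w ^ (4 * ν) / (((4 * (ν : ℝ) + 1) ^ ((1 + ε) / 2) : ℝ) : ℂ)) ∧
    DifferentiableOn ℂ (F ε) (ball (0 : ℂ) 1) ∧
    IntegrableOn (fun w => ‖F ε w‖ ^ 2) (ball (0 : ℂ) 1) volume ∧
    (∫ w in ball (0 : ℂ) 1, ‖F ε w‖ ^ 2) =
      Real.pi * ∑' ν : ℕ, (4 * (ν : ℝ) + 1) ^ (-(2 + ε)) ∧
    (Summable fun ν : ℕ => (4 * (ν : ℝ) + 1) ^ (-(2 + ε))) ∧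
    (∫⁻ w in ball (0 : ℂ) 1, (‖deriv (F ε) w‖₊ : ENNReal) ^ 2) = ⊤ ∧
    ¬ Summable fun ν : ℕ => 4 * (ν : ℝ) * (4 * (ν : ℝ) + 1) ^ (-(1 + ε)) := by
  have hε : -1 ≤ ε := by linarith
  have hb := summable_norm_coeffF_mul_pow hε
  have hdiff : DifferentiableOn ℂ (F ε) (ball 0 1) := by
    rw [F_eq_tsum]; exact differentiableOn_tsum_mul_pow hb
  have hderiv : ∀ w ∈ ball (0 : ℂ) 1, deriv (F ε) w =
      ∑' ν, (coeffF ε ν : ℂ) * ((4 * ν : ℕ) : ℂ) * w ^ (4 * ν - 1) := fun w hw => by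
    rw [F_eq_tsum]; exact (hasSum_deriv_tsum_mul_pow hb hw).tsum_eq.symm
  have hsum : Summable fun ν : ℕ => (4 * (ν : ℝ) + 1) ^ (-(2 + ε)) :=
    summable_four_mul_add_one_rpow (by linarith)
  have hnot : ¬ Summable fun ν : ℕ => 4 * (ν : ℝ) * (4 * (ν : ℝ) + 1) ^ (-(1 + ε)) :=
    not_summable_four_mul_mul_rpow (by linarith)
  have hL2 : ∫⁻ w in ball (0 : ℂ) 1, ‖F ε w‖ₑ ^ 2 =
      ENNReal.ofReal (π * ∑' ν : ℕ, (4 * (ν : ℝ) + 1) ^ (-(2 + ε))) := by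
    rw [lintegral_ball_enorm_sq_eq_tsum (fun m n h => by omega) hb
      (fun w _ => congrFun (F_eq_tsum ε) w) hdiff.continuousOn, ENNReal.ofReal_mul Real.pi_pos.le,
      ENNReal.ofReal_tsum_of_nonneg (fun ν => by positivity) hsum]
    simp_rw [norm_coeffF_sq_div]
  have hH1 : ∫⁻ w in ball (0 : ℂ) 1, ‖deriv (F ε) w‖ₑ ^ 2 = ⊤ := by
    -- `4 * ν - 1` truncates to `0` at `ν = 0`, where the coefficient vanishes anyway; the
    -- exponents `0, 3, 7, 11, …` are still distinct.
    rw [lintegral_ball_enorm_sq_eq_tsum (fun m n h => by omega)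
      (summable_norm_coeffF_mul_deriv_mul_pow hε) hderiv (hdiff.deriv isOpen_ball).continuousOn]
    simp_rw [norm_coeffF_mul_sq_div]
    rw [tsum_ofReal_eq_top_of_not_summable (fun ν => by positivity) hnot,
      ENNReal.mul_top (ENNReal.ofReal_pos.mpr Real.pi_pos).ne']
  obtain ⟨hint, hval⟩ := integrableOn_norm_sq_and_integral_eq_of_lintegral
    (hdiff.continuousOn.aestronglyMeasurable measurableSet_ball) (by positivity) hL2
  refine ⟨fun w hw => ?_, hdiff, hint, hval, hsum, hH1, hnot⟩
  simpa [div_eq_inv_mul, coeffF] using summable_mul_pow_of_mem_ball hb hw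
end
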